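/- For n ≥ 0, the following identities hold in the polynomial ring ℤ[t]: Σ_{x ∈ Cay[n]} t^{des(x)} = Σ_{v ∈ S_n} 2^{des(v)} t^{des(v^{-1})} and Σ_{x ∈ Cay[n]} t^{des∘(x)} = Σ_{v ∈ S_n} 2^{des(v)} t^{asc(v^{-1})}. -/

import Mathlib

namespace CayPaper

/-- A word of length `n` (1-indexed): it vanishes outside `{1,…,n}`. -/
def IsWord (n : ℕ) (v : ℕ → ℕ) : Prop := ∀ i, i ∉ Set.Icc 1 n → v i = 0

/-- A Cayley permutation of length `n`: a word on `{1,…,n}` whose image is `{1,…,k}`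
for some `k ≤ n`. -/
def IsCayley (n : ℕ) (v : ℕ → ℕ) : Prop :=
  IsWord n v ∧ ∃ k, v '' Set.Icc 1 n = Set.Icc 1 k

/-- A weakly increasing Cayley permutation of length `n`. -/
def IsWI (n : ℕ) (v : ℕ → ℕ) : Prop :=
  IsCayley n v ∧ MonotoneOn v (Set.Icc 1 n)

/-- A permutation of `{1,…,n}`, encoded as a word. -/
def IsPermWord (n : ℕ) (v : ℕ → ℕ) : Prop :=
  IsWord n v ∧ Set.BijOn v (Set.Icc 1 n) (Set.Icc 1 n)

/-- The weak descent set `Des(v) = { i ∈ {1,…,n−1} : v(i) ≥ v(i+1) }`. -/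
def desSet (n : ℕ) (v : ℕ → ℕ) : Finset ℕ :=
  (Finset.Icc 1 (n - 1)).filter fun i => v (i + 1) ≤ v i

/-- The strict descent set `Des∘(v) = { i : v(i) > v(i+1) }`. -/
def sdesSet (n : ℕ) (v : ℕ → ℕ) : Finset ℕ :=
  (Finset.Icc 1 (n - 1)).filter fun i => v (i + 1) < v i

/-- The weak ascent set `Asc(v) = { i : v(i) ≤ v(i+1) }`. -/
def ascSet (n : ℕ) (v : ℕ → ℕ) : Finset ℕ :=
  (Finset.Icc 1 (n - 1)).filter fun i => v i ≤ v (i + 1)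

/-- The strict ascent set `Asc∘(v) = { i : v(i) < v(i+1) }`. -/
def sascSet (n : ℕ) (v : ℕ → ℕ) : Finset ℕ :=
  (Finset.Icc 1 (n - 1)).filter fun i => v i < v (i + 1)

def des (n : ℕ) (v : ℕ → ℕ) : ℕ := (desSet n v).card
def sdes (n : ℕ) (v : ℕ → ℕ) : ℕ := (sdesSet n v).card
def asc (n : ℕ) (v : ℕ → ℕ) : ℕ := (ascSet n v).card
def sasc (n : ℕ) (v : ℕ → ℕ) : ℕ := (sascSet n v).card

/-- The maximum value of a word. -/
def wmax (n : ℕ) (v : ℕ → ℕ) : ℕ := (Finset.Icc 1 n).sup v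

/-- Reverse: `v^r(i) = v(n+1−i)`. -/
def wrev (n : ℕ) (v : ℕ → ℕ) : ℕ → ℕ := fun i =>
  if 1 ≤ i ∧ i ≤ n then v (n + 1 - i) else 0

/-- Complement: `v^c(i) = max(v)+1−v(i)`. -/
def wcomp (n : ℕ) (v : ℕ → ℕ) : ℕ → ℕ := fun i =>
  if 1 ≤ i ∧ i ≤ n then wmax n v + 1 - v i else 0

/-- The word `(σ(1), …, σ(n))` (1-indexed) of a permutation `σ` of `Fin n`. -/
def permWord (n : ℕ) (σ : Equiv.Perm (Fin n)) : ℕ → ℕ := fun i =>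
  if h : 1 ≤ i ∧ i ≤ n then ((σ ⟨i - 1, by omega⟩ : Fin n) : ℕ) + 1 else 0

/-- The conjugate of `u`: the unique weakly increasing Cayley permutation of
length `n` whose descent set is `{1,…,n−1} \ Des(u)`. -/
noncomputable def conjWI (n : ℕ) (u : ℕ → ℕ) : ℕ → ℕ :=
  haveI := Classical.dec (∃ w, IsWI n w ∧ desSet n w = Finset.Icc 1 (n - 1) \ desSet n u)
  if h : ∃ w, IsWI n w ∧ desSet n w = Finset.Icc 1 (n - 1) \ desSet n u
    then h.choose else fun _ => 0

/-- A Burge matrix: every row and every column contains a nonzero entry. -/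
def IsBurge {p q : ℕ} (M : Matrix (Fin p) (Fin q) ℕ) : Prop :=
  (∀ i, ∃ j, M i j ≠ 0) ∧ (∀ j, ∃ i, M i j ≠ 0)

/-- The size of a matrix with natural entries: the sum of its entries. -/
def matSize {p q : ℕ} (M : Matrix (Fin p) (Fin q) ℕ) : ℕ := ∑ i, ∑ j, M i j

/-- Burge matrices of size `n` (of all dimensions). -/
def BurgeMatrices (n : ℕ) : Set (Σ p : ℕ, Σ q : ℕ, Matrix (Fin p) (Fin q) ℕ) :=
  {M | IsBurge M.2.2 ∧ matSize M.2.2 = n}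

/-- Binary Burge matrices of size `n`. -/
def BinaryBurgeMatrices (n : ℕ) : Set (Σ p : ℕ, Σ q : ℕ, Matrix (Fin p) (Fin q) ℕ) :=
  {M | M ∈ BurgeMatrices n ∧ ∀ i j, M.2.2 i j ≤ 1}

/-- Burge matrices of size `n` whose every column sums to `1`. -/
def ColSumOneBurgeMatrices (n : ℕ) : Set (Σ p : ℕ, Σ q : ℕ, Matrix (Fin p) (Fin q) ℕ) :=
  {M | M ∈ BurgeMatrices n ∧ ∀ j, ∑ i, M.2.2 i j = 1}

/-- Burge words: pairs `(u,v) ∈ WI[n] × Cay[n]` with `Des(u) ⊆ Des(v)`. -/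
def BurPairs (n : ℕ) : Set ((ℕ → ℕ) × (ℕ → ℕ)) :=
  {p | IsWI n p.1 ∧ IsCayley n p.2 ∧ desSet n p.1 ⊆ desSet n p.2}

/-- Pairs `(u,v) ∈ WI[n] × Cay[n]` with `Des(u) ⊆ Des∘(v)`. -/
def BBurPairs (n : ℕ) : Set ((ℕ → ℕ) × (ℕ → ℕ)) :=
  {p | IsWI n p.1 ∧ IsCayley n p.2 ∧ desSet n p.1 ⊆ sdesSet n p.2}

/-- Pairs `(u,v) ∈ WI[n] × S_n` with `Des(u) ⊆ Des(v)`. -/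
def PBurPairs (n : ℕ) : Set ((ℕ → ℕ) × (ℕ → ℕ)) :=
  {p | IsWI n p.1 ∧ IsPermWord n p.2 ∧ desSet n p.1 ⊆ desSet n p.2}

/-- `Ω[n]`: pairs `(u,v) ∈ WI[n] × Cay[n]` with `Des(u) ⊇ Des(v)`. -/
def OmegaPairs (n : ℕ) : Set ((ℕ → ℕ) × (ℕ → ℕ)) :=
  {p | IsWI n p.1 ∧ IsCayley n p.2 ∧ desSet n p.2 ⊆ desSet n p.1}

/-- `v` lists the positions `1,…,n` in the order obtained by sorting the columns
`(x_i, i)` so that first components are weakly increasing, ties broken by strictly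
decreasing second components.  For a permutation word `v` this says exactly that
`v = Γ(id, x)`, the bottom row of the Burge transpose of `(id, x)`. -/
def sortsColumns (n : ℕ) (x v : ℕ → ℕ) : Prop :=
  ∀ i ∈ Finset.Icc 1 (n - 1),
    x (v i) < x (v (i + 1)) ∨ (x (v i) = x (v (i + 1)) ∧ v (i + 1) < v i)

/-- The Fishburn basis of a permutation word `v`:
`basis(v) = { x ∈ Cay[n] : Γ(id, x) = v }`. -/
def fishburnBasis (n : ℕ) (v : ℕ → ℕ) : Set (ℕ → ℕ) :=
  {x | IsCayley n x ∧ sortsColumns n x v}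

/-- Stanley's `v`-compatibility condition:
`x(v(1)) ≤ ⋯ ≤ x(v(n))` with strict inequality at every ascent of `v`. -/
def VCompatible (n : ℕ) (v x : ℕ → ℕ) : Prop :=
  (∀ i ∈ Finset.Icc 1 (n - 1), x (v i) ≤ x (v (i + 1))) ∧
    ∀ i ∈ Finset.Icc 1 (n - 1), v i < v (i + 1) → x (v i) < x (v (i + 1))

/-- A map `{1,…,n} → {1,…,m}`, encoded as a word. -/
def IsMapTo (n m : ℕ) (x : ℕ → ℕ) : Prop :=
  IsWord n x ∧ ∀ i ∈ Set.Icc 1 n, x i ∈ Set.Icc 1 m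

/-- Weakly increasing maps `{1,…,n} → {1,…,m}`. -/
def WIgen (n m : ℕ) : Set (ℕ → ℕ) :=
  {u | IsMapTo n m u ∧ MonotoneOn u (Set.Icc 1 n)}


/-!
Sort the positions of a Cayley permutation `x` by value, breaking ties by decreasing position,
and let `σ` be the resulting permutation. Then `x ∘ σ` is weakly increasing, so it is determined
by its plateau set `S`, and every plateau is a descent of `σ` because of the tie-breaking rule.
Conversely every pair `(σ, S)` with `S ⊆ Des(σ)` arises this way, so `x ↦ (σ, S)` is a bijection
onto such pairs. Relabelling positions by `σ⁻¹` turns `x ∘ σ` back into `x`, and since `x ∘ σ`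
only stays constant where `σ` descends, `Des(x) = Des(σ⁻¹)`. Summing over the `2^des(σ)` choices
of `S` gives the first identity.

The complement `x ↦ max(x) + 1 - x` is an involution of `Cay[n]` that turns strict descents into
strict ascents, and `sasc = n - 1 - des`. For a permutation, weak and strict ascents agree, which
gives the second identity from the first.
-/

open Finset

section PermWord

variable {n : ℕ}

lemma permWord_of_mem (σ : Equiv.Perm (Fin n)) {i : ℕ} (hi : i ∈ Set.Icc 1 n) :
    permWord n σ i = σ ⟨i - 1, by grind⟩ + 1 :=
  dif_pos hi

lemma permWord_of_notMem (σ : Equiv.Perm (Fin n)) {i : ℕ} (hi : i ∉ Set.Icc 1 n) :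
    permWord n σ i = 0 :=
  dif_neg hi

lemma permWord_val_add_one (σ : Equiv.Perm (Fin n)) (a : Fin n) :
    permWord n σ (a + 1) = σ a + 1 := by
  rw [permWord_of_mem σ (by grind)]
  simp

lemma permWord_mem_Icc (σ : Equiv.Perm (Fin n)) {i : ℕ} (hi : i ∈ Set.Icc 1 n) :
    permWord n σ i ∈ Set.Icc 1 n := by
  rw [permWord_of_mem σ hi, Set.mem_Icc]
  grind

lemma permWord_inv_permWord (σ : Equiv.Perm (Fin n)) {i : ℕ} (hi : i ∈ Set.Icc 1 n) :
    permWord n σ⁻¹ (permWord n σ i) = i := by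
  obtain ⟨a, rfl⟩ : ∃ a : Fin n, (a : ℕ) + 1 = i := ⟨⟨i - 1, by grind⟩, by grind⟩
  simp [permWord_val_add_one]

lemma permWord_permWord_inv (σ : Equiv.Perm (Fin n)) {i : ℕ} (hi : i ∈ Set.Icc 1 n) :
    permWord n σ (permWord n σ⁻¹ i) = i := by
  simpa using permWord_inv_permWord σ⁻¹ hi

lemma image_permWord (σ : Equiv.Perm (Fin n)) :
    permWord n σ '' Set.Icc 1 n = Set.Icc 1 n :=
  (Set.InvOn.bijOn ⟨fun _ ↦ permWord_inv_permWord σ, fun _ ↦ permWord_permWord_inv σ⟩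
    (fun _ ↦ permWord_mem_Icc σ) (fun _ ↦ permWord_mem_Icc σ⁻¹)).image_eq

lemma permWord_succ_ne (σ : Equiv.Perm (Fin n)) {i : ℕ} (hi : i ∈ Finset.Icc 1 (n - 1)) :
    permWord n σ (i + 1) ≠ permWord n σ i := by
  intro h
  have := congrArg (permWord n σ⁻¹) h
  rw [permWord_inv_permWord σ (by grind), permWord_inv_permWord σ (by grind)] at this
  omega

lemma IsWord.apply_zero {x : ℕ → ℕ} (hx : IsWord n x) : x 0 = 0 :=
  hx 0 (by simp)

lemma IsWord.comp_permWord_comp_permWord_inv {x : ℕ → ℕ} (hx : IsWord n x)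
    (σ : Equiv.Perm (Fin n)) : (x ∘ permWord n σ) ∘ permWord n σ⁻¹ = x := by
  funext p
  by_cases hp : p ∈ Set.Icc 1 n
  · simp [permWord_permWord_inv σ hp]
  · simp [permWord_of_notMem _ hp, permWord_of_notMem σ (show 0 ∉ Set.Icc 1 n by simp),
      hx.apply_zero, hx p hp]

lemma IsWord.comp_permWord_inv_comp_permWord {x : ℕ → ℕ} (hx : IsWord n x)
    (σ : Equiv.Perm (Fin n)) : (x ∘ permWord n σ⁻¹) ∘ permWord n σ = x := by
  simpa using hx.comp_permWord_comp_permWord_inv σ⁻¹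

lemma IsCayley.comp_permWord {x : ℕ → ℕ} (hx : IsCayley n x) (σ : Equiv.Perm (Fin n)) :
    IsCayley n (x ∘ permWord n σ) := by
  obtain ⟨hword, k, hk⟩ := hx
  refine ⟨fun i hi ↦ ?_, k, ?_⟩
  · simp [permWord_of_notMem σ hi, hword.apply_zero]
  · rw [Set.image_comp, image_permWord, hk]

end PermWord

section IncWord

variable {n : ℕ}

def plateauSet (n : ℕ) (y : ℕ → ℕ) : Finset ℕ :=
  (Finset.Icc 1 (n - 1)).filter fun i => y i = y (i + 1)

/-- The weakly increasing Cayley permutation of length `n` with plateau set `S ∩ [1, n - 1]`. -/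
def incWord (n : ℕ) (S : Finset ℕ) : ℕ → ℕ := fun j =>
  if 1 ≤ j ∧ j ≤ n then #((Finset.Icc 1 (j - 1)).filter (· ∉ S)) + 1 else 0

lemma incWord_one (S : Finset ℕ) (hn : 1 ≤ n) : incWord n S 1 = 1 := by
  simp [incWord, hn]

lemma incWord_succ (S : Finset ℕ) {j : ℕ} (hj : j ∈ Finset.Icc 1 (n - 1)) :
    incWord n S (j + 1) = incWord n S j + if j ∈ S then 0 else 1 := by
  rw [mem_Icc] at hj
  have hIcc : Finset.Icc 1 j = insert j (Finset.Icc 1 (j - 1)) := by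
    ext a; simp only [mem_Icc, mem_insert]; omega
  simp only [incWord, if_pos (show 1 ≤ j + 1 ∧ j + 1 ≤ n by omega),
    if_pos (show 1 ≤ j ∧ j ≤ n by omega), Nat.add_sub_cancel, hIcc, filter_insert]
  split_ifs with hS
  · rfl
  · rw [card_insert_of_notMem (by simp; omega)]

lemma incWord_monotoneOn (S : Finset ℕ) : MonotoneOn (incWord n S) (Set.Icc 1 n) := by
  refine monotoneOn_of_le_succ Set.ordConnected_Icc fun j _ hj hj' ↦ ?_
  rw [Order.succ_eq_add_one] at hj' ⊢
  rw [incWord_succ S (by grind)]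
  omega

lemma image_incWord_Icc (S : Finset ℕ) {j : ℕ} (hj : j ∈ Set.Icc 1 n) :
    incWord n S '' Set.Icc 1 j = Set.Icc 1 (incWord n S j) := by
  obtain ⟨hj1, hjn⟩ := hj
  induction j, hj1 using Nat.le_induction with
  | base => simp [incWord_one S (by omega)]
  | succ m hm ih =>
    have hstep := incWord_succ (n := n) S (j := m) (by grind)
    have hle : incWord n S 1 ≤ incWord n S m :=
      incWord_monotoneOn S ⟨le_rfl, by omega⟩ ⟨hm, by omega⟩ hm
    rw [incWord_one S (by omega)] at hle
    rw [← Set.insert_Icc_right_eq_Icc_add_one (by omega), Set.image_insert_eq, ih (by omega)]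
    ext c
    simp only [Set.mem_Icc, Set.mem_insert_iff]
    split_ifs at hstep <;> omega

lemma isWI_incWord (S : Finset ℕ) : IsWI n (incWord n S) := by
  refine ⟨⟨fun i hi ↦ if_neg hi, ?_⟩, incWord_monotoneOn S⟩
  rcases Nat.eq_zero_or_pos n with rfl | hn
  · exact ⟨0, by simp⟩
  · exact ⟨_, image_incWord_Icc S ⟨hn, le_rfl⟩⟩

lemma plateauSet_incWord {S : Finset ℕ} (hS : S ⊆ Finset.Icc 1 (n - 1)) :
    plateauSet n (incWord n S) = S := by
  ext i
  simp only [plateauSet, mem_filter]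
  constructor
  · rintro ⟨hi, h⟩
    rw [incWord_succ S hi] at h
    by_contra hiS
    simp [hiS] at h
  · intro hiS
    exact ⟨hS hiS, by simp [incWord_succ S (hS hiS), hiS]⟩

lemma IsWI.apply_one {y : ℕ → ℕ} (hy : IsWI n y) (hn : 1 ≤ n) : y 1 = 1 := by
  obtain ⟨⟨-, k, hk⟩, hmono⟩ := hy
  have h1 : y 1 ∈ Set.Icc 1 k := hk ▸ Set.mem_image_of_mem y ⟨le_rfl, hn⟩
  obtain ⟨j, hj, hj1⟩ : 1 ∈ y '' Set.Icc 1 n := hk ▸ ⟨le_rfl, h1.1.trans h1.2⟩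
  have := hmono ⟨le_rfl, hn⟩ hj hj.1
  grind

lemma IsWI.apply_succ_le {y : ℕ → ℕ} (hy : IsWI n y) {i : ℕ} (hi : i ∈ Finset.Icc 1 (n - 1)) :
    y (i + 1) ≤ y i + 1 := by
  obtain ⟨⟨-, k, hk⟩, hmono⟩ := hy
  rw [mem_Icc] at hi
  have hi' : i ∈ Set.Icc 1 n := ⟨hi.1, by omega⟩
  have hi1 : i + 1 ∈ Set.Icc 1 n := ⟨by omega, by omega⟩
  have hyi : y i ∈ Set.Icc 1 k := hk ▸ Set.mem_image_of_mem y hi'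
  have hyi1 : y (i + 1) ∈ Set.Icc 1 k := hk ▸ Set.mem_image_of_mem y hi1
  by_contra! hgap
  obtain ⟨j, hj, hji⟩ : y i + 1 ∈ y '' Set.Icc 1 n := hk ▸ ⟨by omega, by grind⟩
  rcases le_or_gt j i with hji' | hij
  · have := hmono hj hi' hji'
    omega
  · have := hmono hi1 hj hij
    omega

lemma IsWI.eq_incWord {y : ℕ → ℕ} (hy : IsWI n y) : y = incWord n (plateauSet n y) := by
  funext j
  by_cases hj : j ∈ Set.Icc 1 n
  · obtain ⟨hj1, hjn⟩ := hj
    induction j, hj1 using Nat.le_induction with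
    | base => rw [hy.apply_one (by omega), incWord_one _ (by omega)]
    | succ m hm ih =>
      have hm' : m ∈ Finset.Icc 1 (n - 1) := mem_Icc.2 ⟨hm, by omega⟩
      have hle := hy.2 ⟨hm, by omega⟩ ⟨by omega, hjn⟩ (Nat.le_add_right m 1)
      have hgap := hy.apply_succ_le hm'
      rw [incWord_succ _ hm', ← ih (by omega)]
      simp only [plateauSet, mem_filter, hm', true_and]
      split_ifs <;> omega
  · rw [hy.1.1 j hj]
    exact (if_neg hj).symm

end IncWord

section Descents

variable {n : ℕ}

lemma desSet_comp_permWord_inv {g : ℕ → ℕ} (hg : MonotoneOn g (Set.Icc 1 n))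
    {σ : Equiv.Perm (Fin n)} (hσ : plateauSet n g ⊆ desSet n (permWord n σ)) :
    desSet n (g ∘ permWord n σ⁻¹) = desSet n (permWord n σ⁻¹) := by
  ext i
  simp only [desSet, mem_filter, Function.comp_apply, and_congr_right_iff]
  intro hi
  have hi' := mem_Icc.1 hi
  set a := permWord n σ⁻¹ i
  set b := permWord n σ⁻¹ (i + 1)
  have ha : a ∈ Set.Icc 1 n := permWord_mem_Icc σ⁻¹ ⟨hi'.1, by omega⟩
  have hb : b ∈ Set.Icc 1 n := permWord_mem_Icc σ⁻¹ ⟨by omega, by omega⟩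
  refine ⟨fun hgba ↦ ?_, fun hba ↦ hg hb ha hba⟩
  by_contra! hab
  -- `σ` cannot decrease all the way from `a` to `b`, since it sends them to `i < i + 1`.
  obtain ⟨j, hj, hjσ⟩ : ∃ j ∈ Set.Ico a b, j ∉ desSet n (permWord n σ) := by
    by_contra! hall
    have hanti : AntitoneOn (permWord n σ) (Set.Icc a b) :=
      antitoneOn_of_succ_le Set.ordConnected_Icc fun j _ hj hj' ↦ by
        rw [Order.succ_eq_add_one] at hj' ⊢
        exact (mem_filter.1 (hall j ⟨hj.1, by grind⟩)).2
    have := hanti ⟨le_rfl, hab.le⟩ ⟨hab.le, le_rfl⟩ hab.le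
    rw [permWord_permWord_inv σ ⟨hi'.1, by omega⟩, permWord_permWord_inv σ ⟨by omega, by omega⟩]
      at this
    omega
  have hj' : j ∈ Finset.Icc 1 (n - 1) := mem_Icc.2 ⟨ha.1.trans hj.1, by grind⟩
  have hjg : g j ≠ g (j + 1) := fun h ↦ hjσ (hσ (mem_filter.2 ⟨hj', h⟩))
  have h1 := hg ha ⟨ha.1.trans hj.1, by grind⟩ hj.1
  have h2 := hg ⟨ha.1.trans hj.1, by grind⟩ ⟨by omega, by grind⟩ (Nat.le_add_right j 1)
  have h3 := hg ⟨by omega, by grind⟩ hb (show j + 1 ≤ b from hj.2)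
  omega

end Descents

lemma Tuple.eq_sort_iff_strictMono {n : ℕ} {α : Type*} [LinearOrder α] {f : Fin n → α}
    (hf : Function.Injective f) {σ : Equiv.Perm (Fin n)} :
    σ = Tuple.sort f ↔ StrictMono (f ∘ σ) := by
  rw [Tuple.eq_sort_iff]
  refine ⟨fun h ↦ h.1.strictMono_of_injective (hf.comp σ.injective), fun h ↦ ⟨h.monotone, ?_⟩⟩
  intro i j hij hfij
  exact absurd (σ.injective (hf hfij)) hij.ne

section Sorting

variable {n : ℕ}

def sortKey (n : ℕ) (x : ℕ → ℕ) : Fin n → ℕ ×ₗ (Fin n)ᵒᵈ :=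
  fun a ↦ toLex (x (a + 1), OrderDual.toDual a)

lemma sortKey_injective (x : ℕ → ℕ) : Function.Injective (sortKey n x) :=
  fun _ _ h ↦ OrderDual.toDual.injective (congrArg (fun p ↦ (ofLex p).2) h)

noncomputable def sortPerm (n : ℕ) (x : ℕ → ℕ) : Equiv.Perm (Fin n) :=
  Tuple.sort (sortKey n x)

lemma sortKey_lt_sortKey_iff (x : ℕ → ℕ) (a b : Fin n) :
    sortKey n x a < sortKey n x b ↔ x (a + 1) < x (b + 1) ∨ x (a + 1) = x (b + 1) ∧ b < a := by
  simp [sortKey, Prod.Lex.toLex_lt_toLex]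

lemma sortsColumns_permWord_iff_strictMono (x : ℕ → ℕ) (σ : Equiv.Perm (Fin n)) :
    sortsColumns n x (permWord n σ) ↔ StrictMono (sortKey n x ∘ σ) := by
  cases n with
  | zero => exact iff_of_true (by simp [sortsColumns]) fun a ↦ a.elim0
  | succ m =>
    rw [Fin.strictMono_iff_lt_succ]
    simp only [Function.comp_apply, sortKey_lt_sortKey_iff]
    have hpos (a : Fin m) : permWord (m + 1) σ (a + 1) = σ a.castSucc + 1 :=
      permWord_val_add_one σ a.castSucc
    have hsucc (a : Fin m) : permWord (m + 1) σ (a + 1 + 1) = σ a.succ + 1 :=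
      permWord_val_add_one σ a.succ
    constructor
    · intro h a
      have := h (a + 1) (mem_Icc.2 ⟨by omega, by simp⟩)
      rwa [hpos, hsucc, Nat.add_lt_add_iff_right, Fin.val_fin_lt] at this
    · intro h i hi
      obtain ⟨a, rfl⟩ : ∃ a : Fin m, (a : ℕ) + 1 = i := ⟨⟨i - 1, by grind⟩, by grind⟩
      rw [hpos, hsucc, Nat.add_lt_add_iff_right, Fin.val_fin_lt]
      exact h a

lemma sortsColumns_permWord_iff_eq_sortPerm (x : ℕ → ℕ) (σ : Equiv.Perm (Fin n)) :
    sortsColumns n x (permWord n σ) ↔ σ = sortPerm n x := by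
  rw [sortsColumns_permWord_iff_strictMono, sortPerm,
    Tuple.eq_sort_iff_strictMono (sortKey_injective x)]

lemma sortsColumns_permWord_iff (x : ℕ → ℕ) (σ : Equiv.Perm (Fin n)) :
    sortsColumns n x (permWord n σ) ↔
      MonotoneOn (x ∘ permWord n σ) (Set.Icc 1 n) ∧
        plateauSet n (x ∘ permWord n σ) ⊆ desSet n (permWord n σ) := by
  simp only [sortsColumns, plateauSet, desSet, subset_iff, mem_filter, Function.comp_apply]
  constructor
  · intro h
    refine ⟨monotoneOn_of_le_succ Set.ordConnected_Icc fun i _ hi hi' ↦ ?_,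
      fun i ⟨hi, heq⟩ ↦ ⟨hi, ?_⟩⟩
    · rw [Order.succ_eq_add_one] at hi' ⊢
      simp only [Function.comp_apply]
      rcases h i (mem_Icc.2 ⟨hi.1, by grind⟩) with hlt | ⟨heq, -⟩ <;> omega
    · rcases h i hi with hlt | ⟨-, hlt⟩ <;> omega
  · rintro ⟨hmono, hplat⟩ i hi
    have hi' := mem_Icc.1 hi
    have hle : x (permWord n σ i) ≤ x (permWord n σ (i + 1)) :=
      hmono ⟨hi'.1, by omega⟩ ⟨by omega, by omega⟩ (Nat.le_add_right i 1)
    rcases hle.lt_or_eq with hlt | heq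
    · exact Or.inl hlt
    · exact Or.inr ⟨heq, lt_of_le_of_ne (hplat ⟨hi, heq⟩).2 (permWord_succ_ne σ hi)⟩

end Sorting

section Decomposition

variable {n : ℕ}

lemma sortsColumns_sortPerm (x : ℕ → ℕ) : sortsColumns n x (permWord n (sortPerm n x)) :=
  (sortsColumns_permWord_iff_eq_sortPerm x _).2 rfl

lemma sortPerm_incWord_comp_permWord_inv {σ : Equiv.Perm (Fin n)} {S : Finset ℕ}
    (hS : S ⊆ desSet n (permWord n σ)) :
    sortPerm n (incWord n S ∘ permWord n σ⁻¹) = σ := by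
  refine ((sortsColumns_permWord_iff_eq_sortPerm _ σ).1 ((sortsColumns_permWord_iff _ σ).2 ?_)).symm
  rw [(isWI_incWord S).1.1.comp_permWord_inv_comp_permWord,
    plateauSet_incWord (hS.trans (filter_subset _ _))]
  exact ⟨(isWI_incWord S).2, hS⟩

def descentPairs (n : ℕ) : Finset (Σ _ : Equiv.Perm (Fin n), Finset ℕ) :=
  univ.sigma fun σ ↦ (desSet n (permWord n σ)).powerset

noncomputable def cayleyDecomp (n : ℕ) (x : ℕ → ℕ) : Σ _ : Equiv.Perm (Fin n), Finset ℕ :=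
  ⟨sortPerm n x, plateauSet n (x ∘ permWord n (sortPerm n x))⟩

lemma IsCayley.isWI_comp_permWord_sortPerm {x : ℕ → ℕ} (hx : IsCayley n x) :
    IsWI n (x ∘ permWord n (sortPerm n x)) :=
  ⟨hx.comp_permWord _, ((sortsColumns_permWord_iff x _).1 (sortsColumns_sortPerm x)).1⟩

lemma plateauSet_comp_permWord_sortPerm_subset (x : ℕ → ℕ) :
    plateauSet n (x ∘ permWord n (sortPerm n x)) ⊆ desSet n (permWord n (sortPerm n x)) :=
  ((sortsColumns_permWord_iff x _).1 (sortsColumns_sortPerm x)).2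

lemma bijOn_cayleyDecomp :
    Set.BijOn (cayleyDecomp n) {x | IsCayley n x} (descentPairs n : Set _) := by
  refine Set.InvOn.bijOn (f' := fun p ↦ incWord n p.2 ∘ permWord n p.1⁻¹) ⟨?_, ?_⟩ ?_ ?_
  · intro x (hx : IsCayley n x)
    simp only [cayleyDecomp]
    rw [← hx.isWI_comp_permWord_sortPerm.eq_incWord, hx.1.comp_permWord_comp_permWord_inv]
  · rintro ⟨σ, S⟩ hp
    have hS : S ⊆ desSet n (permWord n σ) := by simpa [descentPairs] using hp
    simp only [cayleyDecomp, sortPerm_incWord_comp_permWord_inv hS,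
      (isWI_incWord S).1.1.comp_permWord_inv_comp_permWord,
      plateauSet_incWord (hS.trans (filter_subset _ _))]
  · intro x _
    simpa [descentPairs, cayleyDecomp] using plateauSet_comp_permWord_sortPerm_subset x
  · intro p _
    exact (isWI_incWord p.2).1.comp_permWord _

lemma IsCayley.desSet_eq_desSet_permWord_inv {x : ℕ → ℕ} (hx : IsCayley n x) :
    desSet n x = desSet n (permWord n (sortPerm n x)⁻¹) := by
  conv_lhs => rw [← hx.1.comp_permWord_comp_permWord_inv (sortPerm n x)]
  exact desSet_comp_permWord_inv hx.isWI_comp_permWord_sortPerm.2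
    (plateauSet_comp_permWord_sortPerm_subset x)

theorem finsum_isCayley_des {M : Type*} [AddCommMonoid M] (f : ℕ → M) :
    ∑ᶠ x ∈ {x | IsCayley n x}, f (des n x) =
      ∑ σ : Equiv.Perm (Fin n), 2 ^ des n (permWord n σ) • f (des n (permWord n σ⁻¹)) := by
  calc ∑ᶠ x ∈ {x | IsCayley n x}, f (des n x)
      = ∑ᶠ p ∈ (descentPairs n : Set (Σ _ : Equiv.Perm (Fin n), Finset ℕ)),
          f (des n (permWord n p.1⁻¹)) :=
        finsum_mem_eq_of_bijOn _ bijOn_cayleyDecomp fun x hx ↦ by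
          simp only [des, cayleyDecomp, IsCayley.desSet_eq_desSet_permWord_inv hx]
    _ = ∑ p ∈ descentPairs n, f (des n (permWord n p.1⁻¹)) := finsum_mem_coe_finset _ _
    _ = _ := by simp [descentPairs, sum_sigma, card_powerset, des]

end Decomposition

section Complement

variable {n : ℕ}

lemma sasc_eq_sub_des (v : ℕ → ℕ) : sasc n v = n - 1 - des n v := by
  have h := card_filter_add_card_filter_not (s := Finset.Icc 1 (n - 1)) fun i ↦ v (i + 1) ≤ v i
  simp only [not_le, Nat.card_Icc] at h
  rw [sasc, sascSet, des, desSet]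
  omega

lemma asc_permWord (σ : Equiv.Perm (Fin n)) :
    asc n (permWord n σ) = n - 1 - des n (permWord n σ) := by
  rw [← sasc_eq_sub_des, asc, sasc, ascSet, sascSet]
  exact congrArg card <| filter_congr fun i hi ↦ (permWord_succ_ne σ hi).symm.le_iff_lt

lemma wmax_eq_of_image_eq {x : ℕ → ℕ} {k : ℕ} (hk : x '' Set.Icc 1 n = Set.Icc 1 k) :
    wmax n x = k := by
  refine le_antisymm (Finset.sup_le fun i hi ↦ ?_) ?_
  · exact (hk ▸ Set.mem_image_of_mem x (mem_Icc.1 hi) : x i ∈ Set.Icc 1 k).2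
  · rcases Nat.eq_zero_or_pos k with rfl | hpos
    · exact Nat.zero_le _
    · obtain ⟨i, hi, rfl⟩ : k ∈ x '' Set.Icc 1 n := hk ▸ ⟨hpos, le_rfl⟩
      exact le_sup (mem_Icc.2 hi)

lemma wcomp_apply_of_image_eq {x : ℕ → ℕ} {k : ℕ} (hk : x '' Set.Icc 1 n = Set.Icc 1 k)
    {i : ℕ} (hi : i ∈ Set.Icc 1 n) : wcomp n x i = k + 1 - x i := by
  rw [wcomp, if_pos (Set.mem_Icc.1 hi), wmax_eq_of_image_eq hk]

lemma image_wcomp {x : ℕ → ℕ} {k : ℕ} (hk : x '' Set.Icc 1 n = Set.Icc 1 k) :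
    wcomp n x '' Set.Icc 1 n = Set.Icc 1 k := by
  have hmem {i : ℕ} (hi : i ∈ Set.Icc 1 n) : x i ∈ Set.Icc 1 k := hk ▸ Set.mem_image_of_mem x hi
  refine Set.ext fun c ↦ ⟨?_, fun hc ↦ ?_⟩
  · rintro ⟨i, hi, rfl⟩
    grind [wcomp_apply_of_image_eq hk hi]
  · obtain ⟨i, hi, hic⟩ : k + 1 - c ∈ x '' Set.Icc 1 n := hk ▸ ⟨by grind, by grind⟩
    exact ⟨i, hi, by grind [wcomp_apply_of_image_eq hk hi]⟩

lemma isCayley_wcomp {x : ℕ → ℕ} (hx : IsCayley n x) : IsCayley n (wcomp n x) :=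
  ⟨fun _ hi ↦ if_neg hi, _, image_wcomp hx.2.choose_spec⟩

lemma wcomp_wcomp {x : ℕ → ℕ} (hx : IsCayley n x) : wcomp n (wcomp n x) = x := by
  obtain ⟨hword, k, hk⟩ := hx
  funext i
  by_cases hi : i ∈ Set.Icc 1 n
  · have : x i ∈ Set.Icc 1 k := hk ▸ Set.mem_image_of_mem x hi
    rw [wcomp_apply_of_image_eq (image_wcomp hk) hi, wcomp_apply_of_image_eq hk hi]
    grind
  · exact (if_neg hi).trans (hword i hi).symm

lemma IsCayley.sdes_eq_sasc_wcomp {x : ℕ → ℕ} (hx : IsCayley n x) :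
    sdes n x = sasc n (wcomp n x) := by
  obtain ⟨-, k, hk⟩ := hx
  refine congrArg card <| filter_congr fun i hi ↦ ?_
  have hi' := mem_Icc.1 hi
  have hi0 : i ∈ Set.Icc 1 n := ⟨hi'.1, by omega⟩
  have hi1 : i + 1 ∈ Set.Icc 1 n := ⟨by omega, by omega⟩
  have h0 : x i ∈ Set.Icc 1 k := hk ▸ Set.mem_image_of_mem x hi0
  have h1 : x (i + 1) ∈ Set.Icc 1 k := hk ▸ Set.mem_image_of_mem x hi1
  rw [wcomp_apply_of_image_eq hk hi0, wcomp_apply_of_image_eq hk hi1]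
  grind

lemma finsum_isCayley_sdes {M : Type*} [AddCommMonoid M] (f : ℕ → M) :
    ∑ᶠ x ∈ {x | IsCayley n x}, f (sdes n x) = ∑ᶠ x ∈ {x | IsCayley n x}, f (n - 1 - des n x) :=
  finsum_mem_eq_of_bijOn (wcomp n)
    (Set.InvOn.bijOn ⟨fun _ hx ↦ wcomp_wcomp hx, fun _ hx ↦ wcomp_wcomp hx⟩
      (fun _ hx ↦ isCayley_wcomp hx) (fun _ hx ↦ isCayley_wcomp hx))
    fun _ hx ↦ by rw [IsCayley.sdes_eq_sasc_wcomp hx, sasc_eq_sub_des]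

end Complement

/-- Theorem 5.3: the Caylerian polynomials satisfy
`C_n(t) = Σ_{v ∈ S_n} 2^{des(v)} t^{des(v⁻¹)}` and
`C∘_n(t) = Σ_{v ∈ S_n} 2^{des(v)} t^{asc(v⁻¹)}` in `ℤ[t]`. -/
theorem stmt9 (n : ℕ) :
    (∑ᶠ x ∈ {x : ℕ → ℕ | IsCayley n x}, (Polynomial.X : Polynomial ℤ) ^ des n x)
      = (∑ σ : Equiv.Perm (Fin n),
          2 ^ des n (permWord n σ) *
            (Polynomial.X : Polynomial ℤ) ^ des n (permWord n σ⁻¹)) ∧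
    (∑ᶠ x ∈ {x : ℕ → ℕ | IsCayley n x}, (Polynomial.X : Polynomial ℤ) ^ sdes n x)
      = ∑ σ : Equiv.Perm (Fin n),
          2 ^ des n (permWord n σ) *
            (Polynomial.X : Polynomial ℤ) ^ asc n (permWord n σ⁻¹) := by
  have two_pow_smul (k : ℕ) (p : Polynomial ℤ) : 2 ^ k • p = 2 ^ k * p := by
    simp [nsmul_eq_mul]
  constructor
  · simp only [finsum_isCayley_des fun d ↦ Polynomial.X ^ d, two_pow_smul]
  · simp only [finsum_isCayley_sdes fun d ↦ (Polynomial.X : Polynomial ℤ) ^ d,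
      finsum_isCayley_des fun d ↦ (Polynomial.X : Polynomial ℤ) ^ (n - 1 - d), two_pow_smul,
      asc_permWord]

end CayPaper
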